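/- arXiv:1005.2557 — 5 statements merged into one kernel-verified Lean document; each statement's English description precedes it below -/
import Mathlib

section
/- Let $n \ge 2$ and let $h = (h_{ij})$ be a symmetric $n \times n$ real matrix. Set $S = \sum_{i,j=1}^{n} h_{ij}^2$ and $T = \sum_{i=1}^{n} h_{ii}$. Then $2 h_{11} h_{22} \ge \sum_{i \ne j} h_{ij}^2 + \frac{T^2}{n-1} - S$. -/
/-!
Merging the two diagonal entries `h₁₁` and `h₂₂` into the single number `h₁₁ + h₂₂` leaves
`n - 1` numbers with sum `T` and sum of squares `∑ᵢ hᵢᵢ² + 2 h₁₁ h₂₂`, so Cauchy–Schwarz gives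
`T² ≤ (n - 1) (∑ᵢ hᵢᵢ² + 2 h₁₁ h₂₂)`. Since `S` is the off-diagonal part plus `∑ᵢ hᵢᵢ²`,
this is the claim.
-/

open Finset

theorem sq_sum_le_card_sub_one_mul_sum_sq_add {ι : Type*} [DecidableEq ι] {s : Finset ι} {a b : ι}
    (ha : a ∈ s) (hb : b ∈ s) (hab : a ≠ b) (f : ι → ℝ) :
    (∑ i ∈ s, f i) ^ 2 ≤ (#s - 1 : ℝ) * (∑ i ∈ s, f i ^ 2 + 2 * f a * f b) := by
  have hbt : b ∈ s.erase a := mem_erase.2 ⟨hab.symm, hb⟩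
  have hsplit (φ : ℝ → ℝ) :
      ∑ i ∈ s, φ (f i) = φ (f a) + φ (f b) + ∑ i ∈ (s.erase a).erase b, φ (f i) := by
    rw [← add_sum_erase _ _ ha, ← add_sum_erase _ _ hbt, add_assoc]
  have hmerge (φ : ℝ → ℝ) :
      ∑ i ∈ s.erase a, φ (Function.update f b (f a + f b) i) =
        φ (f a + f b) + ∑ i ∈ (s.erase a).erase b, φ (f i) := by
    rw [← add_sum_erase _ _ hbt, Function.update_self]
    congr 1
    exact sum_congr rfl fun i hi => by rw [Function.update_of_ne (ne_of_mem_erase hi)]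
  have hcard : (#(s.erase a) : ℝ) = #s - 1 := by
    rw [card_erase_of_mem ha, Nat.cast_pred (card_pos.2 ⟨a, ha⟩)]
  have hcs := sq_sum_le_card_mul_sum_sq (s := s.erase a) (f := Function.update f b (f a + f b))
  have hmerge₁ := hmerge id
  have hmerge₂ := hmerge (· ^ 2)
  have hsplit₁ := hsplit id
  have hsplit₂ := hsplit (· ^ 2)
  simp only [id] at hmerge₁ hmerge₂ hsplit₁ hsplit₂
  rw [hmerge₁, hmerge₂, hcard] at hcs
  rw [hsplit₁, hsplit₂]
  linarith

theorem sum_sum_eq_sum_sum_ite_ne_add_sum_diag {ι M : Type*} [Fintype ι] [DecidableEq ι]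
    [AddCommMonoid M] (f : ι → ι → M) :
    ∑ i, ∑ j, f i j = (∑ i, ∑ j, if i ≠ j then f i j else 0) + ∑ i, f i i := by
  rw [← sum_add_distrib]
  refine sum_congr rfl fun i _ => ?_
  rw [sum_ite, sum_const_zero, add_zero, filter_ne, sum_erase_add _ _ (mem_univ i)]

/-- Key algebraic inequality from the proof of Lemma 4.1: for a symmetric
`n × n` real matrix `h` (`n ≥ 2`), with `S = ∑ h_{ij}²` and `T = ∑ h_{ii}`,
one has `2 h₁₁ h₂₂ ≥ ∑_{i ≠ j} h_{ij}² + T²/(n-1) - S`. -/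
theorem two_mul_h11_h22_ge (n : ℕ) (hn : 2 ≤ n) (h : Fin n → Fin n → ℝ)
    (S : ℝ) (hS : S = ∑ i, ∑ j, (h i j) ^ 2)
    (T : ℝ) (hT : T = ∑ i, h i i) :
    2 * h ⟨0, by omega⟩ ⟨0, by omega⟩ * h ⟨1, by omega⟩ ⟨1, by omega⟩ ≥
      (∑ i, ∑ j, if i ≠ j then (h i j) ^ 2 else 0) + T ^ 2 / (n - 1) - S := by
  have hcs := sq_sum_le_card_sub_one_mul_sum_sq_add (mem_univ ⟨0, by omega⟩)
    (mem_univ ⟨1, by omega⟩) (by simp [Fin.ext_iff]) fun i => h i i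
  rw [card_univ, Fintype.card_fin, ← hT] at hcs
  have hpos : (0 : ℝ) < n - 1 := by
    have : (2 : ℝ) ≤ n := by exact_mod_cast hn
    linarith
  have hdiv := (div_le_iff₀' hpos).2 hcs
  have hdiag := sum_sum_eq_sum_sum_ite_ne_add_sum_diag fun i j => h i j ^ 2
  linarith
end

section
/- Let $n \ge 4$, $p \ge 1$, let $c \ge 0$, let $\lambda \in [-1, 1]$, and let $h^{\alpha}$ ($\alpha = 1, \dots, p$) be symmetric $n \times n$ real matrices. Define $R_{ijkl} = c(\delta_{ik}\delta_{jl} - \delta_{il}\delta_{jk}) + \sum_{\alpha=1}^{p} (h^{\alpha}_{ik} h^{\alpha}_{jl} - h^{\alpha}_{il} h^{\alpha}_{jk})$, and set $S = \sum_{\alpha} \sum_{i,j} (h^{\alpha}_{ij})^2$ and $T_{\alpha} = \sum_{i} h^{\alpha}_{ii}$. If $S < 2c + \frac{1}{n-1} \sum_{\alpha} T_{\alpha}^2$, then $R_{1313} + \lambda^2 R_{1414} + R_{2323} + \lambda^2 R_{2424} - 2\lambda R_{1234} > 0$. -/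
/-!
By the Gauss equation the PIC1 combination is linear in the tensor: the constant-curvature part
contributes `2(1 + λ²)c`, and each normal direction `α` contributes at least
`(1 + λ²)(T_α² / (n - 1) - |h^α|²)`. For a symmetric matrix `f` this rests on two estimates:
Cauchy–Schwarz gives `(tr f)² / (n - 1) ≤ ∑ f_rr² + (f_ii + f_jj) f_kk`, and `|f|²` dominates
`∑ f_rr²` plus twice the squares of `f_ik, f_il, f_jk, f_jl`, which absorb the mixed term
`-2λ R_ijkl` by AM-GM. Summing over `α`, the pinching condition makes the total positive.
-/

open Finset

def constCurvatureTensor {ι : Type*} [DecidableEq ι] (c : ℝ) (i j k l : ι) : ℝ :=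
  c * ((if i = k then (1 : ℝ) else 0) * (if j = l then (1 : ℝ) else 0)
    - (if i = l then (1 : ℝ) else 0) * (if j = k then (1 : ℝ) else 0))

def gaussTensor {ι : Type*} (f : ι → ι → ℝ) (i j k l : ι) : ℝ :=
  f i k * f j l - f i l * f j k

-- `R₁₃₁₃ + λ²R₁₄₁₄ + R₂₃₂₃ + λ²R₂₄₂₄ - 2λR₁₂₃₄` for the frame indices `(1, 2, 3, 4) = (i, j, k, l)`.
def pic1Combination {ι : Type*} (R : ι → ι → ι → ι → ℝ) (i j k l : ι) (lam : ℝ) : ℝ :=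
  R i k i k + lam ^ 2 * R i l i l + R j k j k + lam ^ 2 * R j l j l - 2 * lam * R i j k l

theorem pic1Combination_add_sum {ι κ : Type*} (A : ι → ι → ι → ι → ℝ)
    (B : κ → ι → ι → ι → ι → ℝ) (s : Finset κ) (i j k l : ι) (lam : ℝ) :
    pic1Combination (fun i j k l => A i j k l + ∑ α ∈ s, B α i j k l) i j k l lam
      = pic1Combination A i j k l lam + ∑ α ∈ s, pic1Combination (B α) i j k l lam := by
  simp only [pic1Combination, sum_add_distrib, sum_sub_distrib, ← mul_sum]
  ring

theorem pic1Combination_constCurvatureTensor {ι : Type*} [DecidableEq ι] (c lam : ℝ)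
    {i j k l : ι} (hik : i ≠ k) (hil : i ≠ l) (hjk : j ≠ k) (hjl : j ≠ l) :
    pic1Combination (constCurvatureTensor c) i j k l lam = 2 * (1 + lam ^ 2) * c := by
  simp [pic1Combination, constCurvatureTensor, hik, hil, hjk, hjl, hik.symm, hil.symm,
    hjk.symm, hjl.symm]
  ring

section

variable {ι : Type*} [Fintype ι] [DecidableEq ι]

theorem sq_sum_le_card_sub_one_mul_add_two_mul (g : ι → ℝ) {a c : ι} (hac : a ≠ c) :
    (∑ i, g i) ^ 2 ≤ (Fintype.card ι - 1) * (∑ i, g i ^ 2 + 2 * g a * g c) := by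
  -- Cauchy–Schwarz on `ι ∖ {c}` after moving `g c` into the `a`-th entry.
  have ha : a ∈ univ.erase c := mem_erase.2 ⟨hac, mem_univ a⟩
  set f : ι → ℝ := fun i => g i + if i = a then g c else 0
  have hf_sq : ∀ i, f i ^ 2 = g i ^ 2 + if i = a then 2 * g a * g c + g c ^ 2 else 0 := by
    intro i; by_cases hi : i = a <;> simp [f, hi]; ring
  have hsum : ∑ i ∈ univ.erase c, f i = ∑ i, g i := by
    simp only [f, sum_add_distrib, sum_ite_eq', ha, if_true]
    exact sum_erase_add _ _ (mem_univ c)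
  have hsum_sq : ∑ i ∈ univ.erase c, f i ^ 2 = ∑ i, g i ^ 2 + 2 * g a * g c := by
    simp only [hf_sq, sum_add_distrib, sum_ite_eq', ha, if_true]
    rw [← sum_erase_add _ _ (mem_univ c)]; ring
  have hcard : ((#(univ.erase c) : ℕ) : ℝ) = Fintype.card ι - 1 := by
    rw [card_erase_of_mem (mem_univ c), card_univ, Nat.cast_pred (Fintype.card_pos_iff.2 ⟨c⟩)]
  simpa only [hsum, hsum_sq, hcard] using sq_sum_le_card_mul_sum_sq (s := univ.erase c) (f := f)

theorem sq_sum_le_card_sub_one_mul (g : ι → ℝ) {a b c : ι} (hac : a ≠ c) (hbc : b ≠ c) :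
    (∑ i, g i) ^ 2 ≤ (Fintype.card ι - 1) * (∑ i, g i ^ 2 + (g a + g b) * g c) := by
  have ha := sq_sum_le_card_sub_one_mul_add_two_mul g hac
  have hb := sq_sum_le_card_sub_one_mul_add_two_mul g hbc
  linear_combination (ha + hb) / 2

theorem add_add_le_sum {F : ι → ℝ} (hF : ∀ i, 0 ≤ F i) {x y z : ι}
    (hxy : x ≠ y) (hxz : x ≠ z) (hyz : y ≠ z) : F x + F y + F z ≤ ∑ i, F i := by
  have := sum_le_univ_sum_of_nonneg (s := {x, y, z}) (fun i => hF i)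
  rwa [sum_insert (by simp [hxy, hxz]), sum_pair hyz, ← add_assoc] at this

theorem add_add_add_le_sum {F : ι → ℝ} (hF : ∀ i, 0 ≤ F i) {w x y z : ι}
    (hwx : w ≠ x) (hwy : w ≠ y) (hwz : w ≠ z) (hxy : x ≠ y) (hxz : x ≠ z) (hyz : y ≠ z) :
    F w + F x + F y + F z ≤ ∑ i, F i := by
  have := sum_le_univ_sum_of_nonneg (s := {w, x, y, z}) (fun i => hF i)
  rwa [sum_insert (by simp [hwx, hwy, hwz]), sum_insert (by simp [hxy, hxz]), sum_pair hyz,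
    ← add_assoc, ← add_assoc] at this

theorem sum_sq_diag_add_le_sum_sq (f : ι → ι → ℝ) {i j k l : ι}
    (hij : i ≠ j) (hik : i ≠ k) (hil : i ≠ l) (hjk : j ≠ k) (hjl : j ≠ l) (hkl : k ≠ l) :
    ∑ r, f r r ^ 2 + ((f i k ^ 2 + f i l ^ 2) + (f j k ^ 2 + f j l ^ 2)
      + (f k i ^ 2 + f k j ^ 2) + (f l i ^ 2 + f l j ^ 2)) ≤ ∑ r, ∑ s, f r s ^ 2 := by
  set G : ι → ℝ := fun r => ∑ s, f r s ^ 2 - f r r ^ 2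
  have hrow : ∀ {r x y : ι}, r ≠ x → r ≠ y → x ≠ y → f r x ^ 2 + f r y ^ 2 ≤ G r :=
    fun {r _ _} hrx hry hxy => by
      have := add_add_le_sum (F := fun s => f r s ^ 2) (fun _ => sq_nonneg _) hrx hry hxy
      simp only [G]; linarith
  have hG : ∀ r, 0 ≤ G r := fun r =>
    sub_nonneg.2 (single_le_sum (fun s _ => sq_nonneg (f r s)) (mem_univ r))
  have hrows := add_add_add_le_sum hG hij hik hil hjk hjl hkl
  have hsplit : ∑ r, ∑ s, f r s ^ 2 = ∑ r, f r r ^ 2 + ∑ r, G r := by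
    simp only [G, sum_sub_distrib]; ring
  linarith [hrow hik hil hkl, hrow hjk hjl hkl, hrow hik.symm hjk.symm hij,
    hrow hil.symm hjl.symm hij]

theorem one_add_sq_mul_le_pic1Combination_gaussTensor {f : ι → ι → ℝ}
    (hf : ∀ i j, f i j = f j i) (lam : ℝ) {i j k l : ι}
    (hij : i ≠ j) (hik : i ≠ k) (hil : i ≠ l) (hjk : j ≠ k) (hjl : j ≠ l) (hkl : k ≠ l) :
    (1 + lam ^ 2) * ((∑ r, f r r) ^ 2 / (Fintype.card ι - 1) - ∑ r, ∑ s, f r s ^ 2)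
      ≤ pic1Combination (gaussTensor f) i j k l lam := by
  have hcard : (0 : ℝ) < Fintype.card ι - 1 := by
    have := Fintype.one_lt_card_iff.2 ⟨i, j, hij⟩
    rw [sub_pos]; exact_mod_cast this
  set D := ∑ r, f r r ^ 2
  set E := ∑ r, ∑ s, f r s ^ 2
  set τ := (∑ r, f r r) ^ 2 / (Fintype.card ι - 1)
  have hk : τ ≤ D + (f i i + f j j) * f k k := by
    rw [div_le_iff₀' hcard]; exact sq_sum_le_card_sub_one_mul (fun r => f r r) hik hjk
  have hl : τ ≤ D + (f i i + f j j) * f l l := by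
    rw [div_le_iff₀' hcard]; exact sq_sum_le_card_sub_one_mul (fun r => f r r) hil hjl
  have hoff := sum_sq_diag_add_le_sum_sq f hij hik hil hjk hjl hkl
  rw [hf k i, hf k j, hf l i, hf l j] at hoff
  set O := f i k ^ 2 + f i l ^ 2 + f j k ^ 2 + f j l ^ 2
  have hO : 0 ≤ O := by positivity
  simp only [pic1Combination, gaussTensor, hf k i, hf l i, hf k j, hf l j]
  calc (1 + lam ^ 2) * (τ - E)
      ≤ ((f i i + f j j) * f k k - 2 * O) + lam ^ 2 * ((f i i + f j j) * f l l - 2 * O) := by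
        nlinarith [sq_nonneg lam]
    _ ≤ _ := by
        nlinarith [sq_nonneg (lam * f i k - f j l), sq_nonneg (lam * f j k + f i l),
          mul_nonneg (sq_nonneg lam) hO]

end

/-- Algebraic heart of Theorem 4.1 in a space form of curvature `c ≥ 0`:
with `R_{ijkl} = c(δ_{ik}δ_{jl} - δ_{il}δ_{jk}) + ∑_α (h^α_{ik}h^α_{jl} - h^α_{il}h^α_{jk})`
the Gauss-equation curvature tensor of a submanifold with second fundamental
form components `h^α`, the pinching condition `S < 2c + (∑_α T_α²)/(n-1)`
implies Brendle's PIC1 positivity condition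
`R₁₃₁₃ + λ²R₁₄₁₄ + R₂₃₂₃ + λ²R₂₄₂₄ - 2λR₁₂₃₄ > 0` for all `λ ∈ [-1,1]`. -/
theorem pic1_positivity (n p : ℕ) (hn : 4 ≤ n)
    (c : ℝ) (lam : ℝ)
    (h : Fin p → Fin n → Fin n → ℝ)
    (hsymm : ∀ α i j, h α i j = h α j i)
    (R : Fin n → Fin n → Fin n → Fin n → ℝ)
    (hR : ∀ i j k l, R i j k l =
      c * ((if i = k then (1 : ℝ) else 0) * (if j = l then (1 : ℝ) else 0)
          - (if i = l then (1 : ℝ) else 0) * (if j = k then (1 : ℝ) else 0))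
        + ∑ α, (h α i k * h α j l - h α i l * h α j k))
    (S : ℝ) (hS : S = ∑ α, ∑ i, ∑ j, (h α i j) ^ 2)
    (T : Fin p → ℝ) (hT : ∀ α, T α = ∑ i, h α i i)
    (hpinch : S < 2 * c + (∑ α, (T α) ^ 2) / (n - 1)) :
    R ⟨0, by omega⟩ ⟨2, by omega⟩ ⟨0, by omega⟩ ⟨2, by omega⟩
      + lam ^ 2 * R ⟨0, by omega⟩ ⟨3, by omega⟩ ⟨0, by omega⟩ ⟨3, by omega⟩
      + R ⟨1, by omega⟩ ⟨2, by omega⟩ ⟨1, by omega⟩ ⟨2, by omega⟩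
      + lam ^ 2 * R ⟨1, by omega⟩ ⟨3, by omega⟩ ⟨1, by omega⟩ ⟨3, by omega⟩
      - 2 * lam * R ⟨0, by omega⟩ ⟨1, by omega⟩ ⟨2, by omega⟩ ⟨3, by omega⟩ > 0 := by
  have hR' : R = fun i j k l =>
      constCurvatureTensor c i j k l + ∑ α, gaussTensor (h α) i j k l := by
    funext i j k l; exact hR i j k l
  have hα := fun α => one_add_sq_mul_le_pic1Combination_gaussTensor (hsymm α) lam
    (i := ⟨0, by omega⟩) (j := ⟨1, by omega⟩) (k := ⟨2, by omega⟩) (l := ⟨3, by omega⟩)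
    (by simp) (by simp) (by simp) (by simp) (by simp) (by simp)
  have hsum := sum_le_sum fun α (_ : α ∈ univ) => hα α
  simp only [Fintype.card_fin, ← hT, ← mul_sum, sum_sub_distrib, ← sum_div, ← hS] at hsum
  change 0 < pic1Combination R ⟨0, by omega⟩ ⟨1, by omega⟩ ⟨2, by omega⟩ ⟨3, by omega⟩ lam
  rw [hR', pic1Combination_add_sum, pic1Combination_constCurvatureTensor c lam
    (by simp) (by simp) (by simp) (by simp)]
  have := mul_pos (by positivity : (0 : ℝ) < 1 + lam ^ 2) (sub_pos.2 hpinch)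
  linarith
end

section
/- Let $a_1, a_2, a_3$ be real numbers, let $q \in \{1, 2\}$ and $r = 3 - q$, set $T = a_1 + a_2 + a_3$, $\tilde{S} = a_1^2 + a_2^2 + a_3^2$, and $Z = -\Big( \sum_{i=1}^{q} a_i \Big) \Big( T - \sum_{i=1}^{q} a_i \Big)$. Then $Z \le \frac{qr}{3} \tilde{S} - \Big[ \frac{q(r-q)}{9} + \frac{q}{3} \Big] T^2 + \frac{|r-q|}{3} \, |T| \sqrt{ \frac{qr}{3} \Big( \tilde{S} - \frac{T^2}{3} \Big) }$. (Note that $\tilde{S} \ge T^2/3$ always holds, so the square root is well defined.) -/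
lemma key_estimate (b T P : ℝ) (h : b ^ 2 ≤ 2/3 * P) :
    b ^ 2 - b * T / 3 - 2 * T ^ 2 / 9 ≤
      2/3 * P - 2 * T ^ 2 / 9 + 1/3 * |T| * Real.sqrt (2/3 * P) := by
  have hP : (0:ℝ) ≤ 2/3 * P := le_trans (sq_nonneg b) h
  set s := Real.sqrt (2/3 * P) with hs
  have hs2 : s ^ 2 = 2/3 * P := Real.sq_sqrt hP
  have hbs : |b| ≤ s := by
    have := Real.sqrt_le_sqrt h
    rwa [Real.sqrt_sq_eq_abs] at this
  have hbT : -(b * T) ≤ s * |T| := by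
    calc -(b * T) ≤ |b * T| := neg_le_abs _
    _ = |b| * |T| := abs_mul _ _
    _ ≤ s * |T| := mul_le_mul_of_nonneg_right hbs (abs_nonneg T)
  nlinarith [abs_nonneg T, Real.sqrt_nonneg (2/3 * P)]

/-- Inequality (9) in the proof of Theorem 3.1: for reals `a₁, a₂, a₃`,
`q ∈ {1,2}`, `r = 3-q`, `T = a₁+a₂+a₃`, `S̃ = a₁²+a₂²+a₃²`, and
`Z = -(∑_{i=1}^q aᵢ)(T - ∑_{i=1}^q aᵢ)`, one has
`Z ≤ (qr/3)S̃ - [q(r-q)/9 + q/3]T² + (|r-q|/3)|T|√((qr/3)(S̃ - T²/3))`. -/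
theorem stability_product_estimate (a₁ a₂ a₃ : ℝ) (q : ℕ) (hq : q = 1 ∨ q = 2)
    (r : ℕ) (hr : r = 3 - q)
    (T : ℝ) (hT : T = a₁ + a₂ + a₃)
    (Stil : ℝ) (hStil : Stil = a₁ ^ 2 + a₂ ^ 2 + a₃ ^ 2)
    (Z : ℝ) (hZ : Z = -(∑ i ∈ Finset.univ.filter (fun i : Fin 3 => (i : ℕ) < q),
        ![a₁, a₂, a₃] i) *
      (T - ∑ i ∈ Finset.univ.filter (fun i : Fin 3 => (i : ℕ) < q), ![a₁, a₂, a₃] i)) :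
    Z ≤ ((q : ℝ) * (r : ℝ) / 3) * Stil
        - ((q : ℝ) * ((r : ℝ) - (q : ℝ)) / 9 + (q : ℝ) / 3) * T ^ 2
        + (|(r : ℝ) - (q : ℝ)| / 3) * |T| *
            Real.sqrt (((q : ℝ) * (r : ℝ) / 3) * (Stil - T ^ 2 / 3)) := by
  rcases hq with rfl | rfl
  · obtain rfl : r = 2 := by omega
    have hsum : (∑ i ∈ Finset.univ.filter (fun i : Fin 3 => (i : ℕ) < 1),
        ![a₁, a₂, a₃] i) = a₁ := by
      simp [Finset.sum_filter, Fin.sum_univ_three]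
    rw [hsum] at hZ
    have hb : (a₁ - T/3) ^ 2 ≤ 2/3 * (Stil - T ^ 2 / 3) := by
      subst hT hStil; nlinarith [sq_nonneg (a₂ - a₃)]
    have key := key_estimate (a₁ - T/3) T (Stil - T ^ 2 / 3) hb
    have e : ((1:ℕ):ℝ) * ((2:ℕ):ℝ) / 3 * (Stil - T ^ 2 / 3)
        = 2/3 * (Stil - T ^ 2 / 3) := by norm_num
    rw [e]
    have habs : |((2:ℕ):ℝ) - ((1:ℕ):ℝ)| = 1 := by norm_num
    rw [habs]
    push_cast
    nlinarith [key]
  · obtain rfl : r = 1 := by omega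
    have hsum : (∑ i ∈ Finset.univ.filter (fun i : Fin 3 => (i : ℕ) < 2),
        ![a₁, a₂, a₃] i) = a₁ + a₂ := by
      simp [Finset.sum_filter, Fin.sum_univ_three]
    rw [hsum] at hZ
    have hb : (a₃ - T/3) ^ 2 ≤ 2/3 * (Stil - T ^ 2 / 3) := by
      subst hT hStil; nlinarith [sq_nonneg (a₁ - a₂)]
    have key := key_estimate (a₃ - T/3) T (Stil - T ^ 2 / 3) hb
    have e : ((2:ℕ):ℝ) * ((1:ℕ):ℝ) / 3 * (Stil - T ^ 2 / 3)
        = 2/3 * (Stil - T ^ 2 / 3) := by norm_num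
    rw [e]
    have habs : |((1:ℕ):ℝ) - ((2:ℕ):ℝ)| = 1 := by norm_num
    rw [habs]
    push_cast
    subst hT
    nlinarith [key]
end

section
/- Let $h = (h_{ij})$ be a symmetric $3 \times 3$ real matrix and let $q \in \{1, 2\}$. Set $S = \sum_{i,j=1}^{3} h_{ij}^2$ and $T = \sum_{i=1}^{3} h_{ii}$. Then $2 \sum_{i=1}^{q} \sum_{k=q+1}^{3} h_{ik}^2 - \Big( \sum_{i=1}^{q} h_{ii} \Big) \Big( \sum_{k=q+1}^{3} h_{kk} \Big) \le S - \frac{T^2}{2}$. -/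
/-- Single-matrix form of estimate (10) in the proof of Theorem 3.1: for a
symmetric `3 × 3` real matrix `h`, `q ∈ {1,2}`, `S = ∑ h_{ij}²`, `T = tr h`,
`2 ∑_{i≤q} ∑_{k>q} h_{ik}² - (∑_{i≤q} h_{ii})(∑_{k>q} h_{kk}) ≤ S - T²/2`. -/
theorem stability_integrand_single (h : Fin 3 → Fin 3 → ℝ)
    (hsymm : ∀ i j, h i j = h j i) (q : ℕ) (hq : q = 1 ∨ q = 2)
    (S : ℝ) (hS : S = ∑ i, ∑ j, (h i j) ^ 2)
    (T : ℝ) (hT : T = ∑ i, h i i) :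
    2 * (∑ i ∈ Finset.univ.filter (fun i : Fin 3 => (i : ℕ) < q),
          ∑ k ∈ Finset.univ.filter (fun k : Fin 3 => q ≤ (k : ℕ)), (h i k) ^ 2)
      - (∑ i ∈ Finset.univ.filter (fun i : Fin 3 => (i : ℕ) < q), h i i)
        * (∑ k ∈ Finset.univ.filter (fun k : Fin 3 => q ≤ (k : ℕ)), h k k)
      ≤ S - T ^ 2 / 2 := by
  have h01 := hsymm 0 1
  have h02 := hsymm 0 2
  have h12 := hsymm 1 2
  subst hS hT
  rcases hq with rfl | rfl <;>
    · simp only [Finset.sum_filter, Fin.sum_univ_three]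
      norm_num
      simp only [h01, h02, h12]
      nlinarith [sq_nonneg (h 0 0 - h 1 1), sq_nonneg (h 0 0 - h 2 2),
        sq_nonneg (h 1 1 - h 2 2), sq_nonneg (h 1 0), sq_nonneg (h 2 0), sq_nonneg (h 2 1)]
end

section
/- Let $c \ge 0$, $p \ge 1$, $q \in \{1, 2\}$, and let $h^{\alpha}$ ($\alpha = 1, \dots, p$) be symmetric $3 \times 3$ real matrices. Set $S = \sum_{\alpha=1}^{p} \sum_{i,j=1}^{3} (h^{\alpha}_{ij})^2$ and $T_{\alpha} = \sum_{i=1}^{3} h^{\alpha}_{ii}$. If $S < 2c + \frac{1}{2} \sum_{\alpha=1}^{p} T_{\alpha}^2$, then $\sum_{\alpha=1}^{p} \Big[ 2 \sum_{i=1}^{q} \sum_{k=q+1}^{3} (h^{\alpha}_{ik})^2 - \Big( \sum_{i=1}^{q} h^{\alpha}_{ii} \Big) \Big( \sum_{k=q+1}^{3} h^{\alpha}_{kk} \Big) \Big] < q(3-q)\, c$. -/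
/-- Key estimate (10)–(11) in the proof of Theorem 3.1: for symmetric `3 × 3`
real matrices `h^α` (`α = 1, …, p`), `c ≥ 0`, `q ∈ {1,2}`, with `S` the total
squared norm and `T_α` the traces, the pinching condition
`S < 2c + ½ ∑_α T_α²` implies the Lawson–Simons–Xin condition
`∑_α [2 ∑_{i≤q} ∑_{k>q} (h^α_{ik})² - (∑_{i≤q} h^α_{ii})(∑_{k>q} h^α_{kk})] < q(3-q)c`. -/
theorem lawson_simons_xin_condition (c : ℝ) (hc : 0 ≤ c) (p : ℕ) (hp : 1 ≤ p)
    (q : ℕ) (hq : q = 1 ∨ q = 2)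
    (h : Fin p → Fin 3 → Fin 3 → ℝ)
    (hsymm : ∀ α i j, h α i j = h α j i)
    (S : ℝ) (hS : S = ∑ α, ∑ i, ∑ j, (h α i j) ^ 2)
    (T : Fin p → ℝ) (hT : ∀ α, T α = ∑ i, h α i i)
    (hpinch : S < 2 * c + (1 / 2) * ∑ α, (T α) ^ 2) :
    ∑ α, (2 * (∑ i ∈ Finset.univ.filter (fun i : Fin 3 => (i : ℕ) < q),
            ∑ k ∈ Finset.univ.filter (fun k : Fin 3 => q ≤ (k : ℕ)), (h α i k) ^ 2)
        - (∑ i ∈ Finset.univ.filter (fun i : Fin 3 => (i : ℕ) < q), h α i i)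
          * (∑ k ∈ Finset.univ.filter (fun k : Fin 3 => q ≤ (k : ℕ)), h α k k))
      < (q : ℝ) * (3 - (q : ℝ)) * c := by
  have key : ∀ α, (2 * (∑ i ∈ Finset.univ.filter (fun i : Fin 3 => (i : ℕ) < q),
            ∑ k ∈ Finset.univ.filter (fun k : Fin 3 => q ≤ (k : ℕ)), (h α i k) ^ 2)
        - (∑ i ∈ Finset.univ.filter (fun i : Fin 3 => (i : ℕ) < q), h α i i)
          * (∑ k ∈ Finset.univ.filter (fun k : Fin 3 => q ≤ (k : ℕ)), h α k k))
      ≤ (∑ i, ∑ j, (h α i j) ^ 2) - (1 / 2) * (T α) ^ 2 := by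
    intro α
    have h01 := hsymm α 0 1
    have h02 := hsymm α 0 2
    have h12 := hsymm α 1 2
    rcases hq with rfl | rfl <;>
      simp only [hT, Fin.sum_univ_three, Finset.sum_filter, Fin.isValue] <;>
      norm_num <;> rw [h01, h02, h12] <;>
      nlinarith [sq_nonneg (h α 0 0), sq_nonneg (h α 2 2),
        sq_nonneg (h α 1 1 - h α 2 2), sq_nonneg (h α 0 0 - h α 1 1),
        sq_nonneg (h α 2 1), sq_nonneg (h α 1 0)]
  have hq2 : (q : ℝ) * (3 - (q : ℝ)) = 2 := by rcases hq with rfl | rfl <;> norm_num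
  rw [hq2]
  calc _ ≤ ∑ α, ((∑ i, ∑ j, (h α i j) ^ 2) - (1 / 2) * (T α) ^ 2) := Finset.sum_le_sum (fun α _ => key α)
    _ = S - (1 / 2) * ∑ α, (T α) ^ 2 := by
        rw [hS, Finset.sum_sub_distrib, Finset.mul_sum]
    _ < 2 * c := by linarith
end
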